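/- arXiv:2605.04468 — 3 statements merged into one kernel-verified Lean document; each statement's English description precedes it below -/
import Mathlib

section
/- Let p and r be probability distributions with full support on a finite set, α ∈ [0,1), and define q by q_i = p_i^{1-α} r_i^{α} / Z with Z = Σ_j p_j^{1-α} r_j^{α}. Then KL(q ‖ p) ≤ (α/(1-α)) · KL(p ‖ r). -/
open Real Finset

private lemma kl_nonneg' {ι : Type*} [Fintype ι] (a b : ι → ℝ)
    (ha : ∀ i, 0 < a i) (hb : ∀ i, 0 < b i)
    (hab : ∑ i, b i ≤ ∑ i, a i) : 0 ≤ ∑ i, a i * Real.log (a i / b i) := by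
  have key : ∀ i ∈ Finset.univ, a i * Real.log (b i / a i) ≤ b i - a i := by
    intro i _
    have h1 : Real.log (b i / a i) ≤ b i / a i - 1 :=
      Real.log_le_sub_one_of_pos (div_pos (hb i) (ha i))
    have h2 : a i * Real.log (b i / a i) ≤ a i * (b i / a i - 1) :=
      mul_le_mul_of_nonneg_left h1 (ha i).le
    have h3 : a i * (b i / a i - 1) = b i - a i := by
      rw [mul_sub, mul_div_cancel₀ _ (ha i).ne', mul_one]
    linarith
  have h2 : ∑ i, a i * Real.log (b i / a i) ≤ ∑ i, (b i - a i) :=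
    Finset.sum_le_sum key
  have h3 : ∑ i, (b i - a i) ≤ 0 := by
    rw [Finset.sum_sub_distrib]; linarith
  have h4 : ∑ i, a i * Real.log (a i / b i) = -∑ i, a i * Real.log (b i / a i) := by
    rw [← Finset.sum_neg_distrib]
    refine Finset.sum_congr rfl fun i _ => ?_
    rw [show a i / b i = (b i / a i)⁻¹ by rw [inv_div], Real.log_inv]
    ring
  linarith

theorem stmt_4 {ι : Type*} [Fintype ι]
    (p r : ι → ℝ) (hp : ∀ i, 0 < p i) (hr : ∀ i, 0 < r i)
    (hps : ∑ i, p i = 1) (hrs : ∑ i, r i = 1)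
    (α : ℝ) (hα : α ∈ Set.Ico (0:ℝ) 1)
    (Z : ℝ) (hZ : Z = ∑ j, p j ^ (1 - α) * r j ^ α)
    (q : ι → ℝ) (hq : ∀ i, q i = p i ^ (1 - α) * r i ^ α / Z) :
    ∑ i, q i * Real.log (q i / p i)
      ≤ (α / (1 - α)) * ∑ i, p i * Real.log (p i / r i) := by
  obtain ⟨hα0, hα1⟩ := hα
  have h1α : (0:ℝ) < 1 - α := by linarith
  have hne : (Finset.univ : Finset ι).Nonempty := by
    by_contra h
    rw [Finset.not_nonempty_iff_eq_empty] at h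
    rw [h, Finset.sum_empty] at hps
    norm_num at hps
  have hZpos : 0 < Z := by
    rw [hZ]
    exact Finset.sum_pos
      (fun i _ => mul_pos (Real.rpow_pos_of_pos (hp i) _) (Real.rpow_pos_of_pos (hr i) _)) hne
  have hqpos : ∀ i, 0 < q i := fun i => by
    rw [hq i]
    exact div_pos (mul_pos (Real.rpow_pos_of_pos (hp i) _) (Real.rpow_pos_of_pos (hr i) _)) hZpos
  have hqs : ∑ i, q i = 1 := by
    rw [show (∑ i, q i) = ∑ j, p j ^ (1 - α) * r j ^ α / Z from
      Finset.sum_congr rfl fun i _ => hq i, ← Finset.sum_div, ← hZ, div_self hZpos.ne']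
  have logq : ∀ i, Real.log (q i) = (1 - α) * Real.log (p i) + α * Real.log (r i) - Real.log Z := by
    intro i
    rw [hq i, Real.log_div (mul_pos (Real.rpow_pos_of_pos (hp i) _)
      (Real.rpow_pos_of_pos (hr i) _)).ne' hZpos.ne',
      Real.log_mul (Real.rpow_pos_of_pos (hp i) _).ne' (Real.rpow_pos_of_pos (hr i) _).ne',
      Real.log_rpow (hp i), Real.log_rpow (hr i)]
  set A := ∑ i, q i * Real.log (q i / p i) with hA
  set B := ∑ i, q i * Real.log (q i / r i) with hB
  set C := ∑ i, p i * Real.log (p i / q i) with hC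
  set D := ∑ i, p i * Real.log (p i / r i) with hD
  have key1 : (1 - α) * A + α * B = -Real.log Z := by
    rw [hA, hB, Finset.mul_sum, Finset.mul_sum, ← Finset.sum_add_distrib]
    have : ∀ i ∈ Finset.univ,
        (1 - α) * (q i * Real.log (q i / p i)) + α * (q i * Real.log (q i / r i))
        = q i * (-Real.log Z) := by
      intro i _
      rw [Real.log_div (hqpos i).ne' (hp i).ne', Real.log_div (hqpos i).ne' (hr i).ne', logq i]
      ring
    rw [Finset.sum_congr rfl this, ← Finset.sum_mul, hqs, one_mul]
  have key2 : α * D = C - Real.log Z := by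
    rw [hD, hC, Finset.mul_sum]
    have : ∀ i ∈ Finset.univ,
        α * (p i * Real.log (p i / r i))
        = p i * Real.log (p i / q i) - p i * Real.log Z := by
      intro i _
      rw [Real.log_div (hp i).ne' (hr i).ne', Real.log_div (hp i).ne' (hqpos i).ne', logq i]
      ring
    rw [Finset.sum_congr rfl this, Finset.sum_sub_distrib, ← Finset.sum_mul, hps, one_mul]
  have hBnn : 0 ≤ B := kl_nonneg' q r hqpos hr (by rw [hqs, hrs])
  have hCnn : 0 ≤ C := kl_nonneg' p q hp hqpos (by rw [hqs, hps])
  have hmain : (1 - α) * A ≤ α * D := by nlinarith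
  rw [div_mul_eq_mul_div, le_div_iff₀ h1α]
  linarith
end

section
/- Let p, r be probability distributions with full support on a finite set and α ∈ (0,1). Define q by q_i = p_i^{1-α} r_i^{α} / Z, Z = Σ_j p_j^{1-α} r_j^{α}, and for a distribution u let J(u) = (1-α)·KL(u ‖ p) + α·KL(u ‖ r). Then J(q) ≤ α·KL(p ‖ r) and J(q) ≤ (1-α)·KL(r ‖ p). -/
open Real Finset

lemma gibbs_aux {ι : Type*} [Fintype ι] (f g : ι → ℝ)
    (hf : ∀ i, 0 < f i) (hg : ∀ i, 0 < g i)
    (h : ∑ i, g i ≤ ∑ i, f i) :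
    0 ≤ ∑ i, f i * Real.log (f i / g i) := by
  have key : ∀ i ∈ univ, f i - g i ≤ f i * Real.log (f i / g i) := by
    intro i _
    have h1 : Real.log (g i / f i) ≤ g i / f i - 1 :=
      Real.log_le_sub_one_of_pos (div_pos (hg i) (hf i))
    have h2 : Real.log (f i / g i) = - Real.log (g i / f i) := by
      rw [← Real.log_inv, inv_div]
    have h3 : f i * (g i / f i - 1) = g i - f i := by
      have hf' := (hf i).ne'
      field_simp
    have h4 : f i * Real.log (g i / f i) ≤ g i - f i := by
      calc f i * Real.log (g i / f i) ≤ f i * (g i / f i - 1) :=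
            mul_le_mul_of_nonneg_left h1 (hf i).le
        _ = g i - f i := h3
    rw [h2]; linarith
  calc (0:ℝ) = ∑ i, f i - ∑ i, f i := by ring
    _ ≤ ∑ i, f i - ∑ i, g i := by linarith
    _ = ∑ i, (f i - g i) := by rw [Finset.sum_sub_distrib]
    _ ≤ ∑ i, f i * Real.log (f i / g i) := Finset.sum_le_sum key

theorem stmt_14 {ι : Type*} [Fintype ι]
    (p r : ι → ℝ) (hp : ∀ i, 0 < p i) (hr : ∀ i, 0 < r i)
    (hps : ∑ i, p i = 1) (hrs : ∑ i, r i = 1)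
    (α : ℝ) (hα : α ∈ Set.Ioo (0:ℝ) 1)
    (Z : ℝ) (hZ : Z = ∑ j, p j ^ (1 - α) * r j ^ α)
    (q : ι → ℝ) (hq : ∀ i, q i = p i ^ (1 - α) * r i ^ α / Z) :
    ((1 - α) * ∑ i, q i * Real.log (q i / p i)
        + α * ∑ i, q i * Real.log (q i / r i)
      ≤ α * ∑ i, p i * Real.log (p i / r i)) ∧
    ((1 - α) * ∑ i, q i * Real.log (q i / p i)
        + α * ∑ i, q i * Real.log (q i / r i)
      ≤ (1 - α) * ∑ i, r i * Real.log (r i / p i)) := by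
  have hne : (univ : Finset ι).Nonempty := by
    by_contra h
    rw [Finset.not_nonempty_iff_eq_empty] at h
    simp [h] at hps
  have hZ0 : 0 < Z := by
    rw [hZ]
    exact Finset.sum_pos (fun i _ => mul_pos (Real.rpow_pos_of_pos (hp i) _)
      (Real.rpow_pos_of_pos (hr i) _)) hne
  have hq0 : ∀ i, 0 < q i := fun i => by
    rw [hq i]
    exact div_pos (mul_pos (Real.rpow_pos_of_pos (hp i) _)
      (Real.rpow_pos_of_pos (hr i) _)) hZ0
  have hqs : ∑ i, q i = 1 := by
    simp only [hq]
    rw [← Finset.sum_div, ← hZ, div_self hZ0.ne']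
  have hlogq : ∀ i, Real.log (q i)
      = (1 - α) * Real.log (p i) + α * Real.log (r i) - Real.log Z := by
    intro i
    rw [hq i, Real.log_div (mul_pos (Real.rpow_pos_of_pos (hp i) _) (Real.rpow_pos_of_pos (hr i) _)).ne' hZ0.ne',
      Real.log_mul (Real.rpow_pos_of_pos (hp i) _).ne' (Real.rpow_pos_of_pos (hr i) _).ne',
      Real.log_rpow (hp i), Real.log_rpow (hr i)]
  have hL : (1 - α) * ∑ i, q i * Real.log (q i / p i)
      + α * ∑ i, q i * Real.log (q i / r i) = - Real.log Z := by
    rw [Finset.mul_sum, Finset.mul_sum, ← Finset.sum_add_distrib]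
    have : ∀ i ∈ univ, (1 - α) * (q i * Real.log (q i / p i))
        + α * (q i * Real.log (q i / r i)) = q i * (- Real.log Z) := by
      intro i _
      rw [Real.log_div (hq0 i).ne' (hp i).ne', Real.log_div (hq0 i).ne' (hr i).ne',
        hlogq i]
      ring
    rw [Finset.sum_congr rfl this, ← Finset.sum_mul, hqs, one_mul]
  constructor
  · rw [hL]
    have h1 : α * (∑ i, p i * Real.log (p i / r i)) + Real.log Z
        = ∑ i, p i * Real.log (p i / q i) := by
      rw [Finset.mul_sum]
      have : ∀ i ∈ univ, p i * Real.log (p i / q i)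
          = α * (p i * Real.log (p i / r i)) + p i * Real.log Z := by
        intro i _
        rw [Real.log_div (hp i).ne' (hq0 i).ne', Real.log_div (hp i).ne' (hr i).ne',
          hlogq i]
        ring
      rw [Finset.sum_congr rfl this, Finset.sum_add_distrib, ← Finset.sum_mul, hps,
        one_mul]
    have h2 : 0 ≤ ∑ i, p i * Real.log (p i / q i) :=
      gibbs_aux p q hp hq0 (by rw [hqs, hps])
    linarith
  · rw [hL]
    have h1 : (1 - α) * (∑ i, r i * Real.log (r i / p i)) + Real.log Z
        = ∑ i, r i * Real.log (r i / q i) := by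
      rw [Finset.mul_sum]
      have : ∀ i ∈ univ, r i * Real.log (r i / q i)
          = (1 - α) * (r i * Real.log (r i / p i)) + r i * Real.log Z := by
        intro i _
        rw [Real.log_div (hr i).ne' (hq0 i).ne', Real.log_div (hr i).ne' (hp i).ne',
          hlogq i]
        ring
      rw [Finset.sum_congr rfl this, Finset.sum_add_distrib, ← Finset.sum_mul, hrs,
        one_mul]
    have h2 : 0 ≤ ∑ i, r i * Real.log (r i / q i) :=
      gibbs_aux r q hr hq0 (by rw [hqs, hrs])
    linarith
end

section
/- Let p and r be probability distributions with full support on a finite set and α ∈ [0,1). With q_i = p_i^{1-α} r_i^{α} / Z, Z = Σ_j p_j^{1-α} r_j^{α}, one has KL(q ‖ r) ≤ KL(p ‖ r). -/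
/-!
For a positive vector `x` summing to one, the weighted divergence
`J x = (1 - α) KL(x ‖ p) + α KL(x ‖ r)` equals `KL(x ‖ q) - log Z`, because
`log q = (1 - α) log p + α log r - log Z`. By Gibbs' inequality `q` therefore minimises `J`, so
`α KL(q ‖ r) ≤ J q ≤ J p = α KL(p ‖ r)`; divide by `α` when `α > 0`, while `q = p` when `α = 0`.
-/

open Real Finset

noncomputable def relEntropy {ι : Type*} [Fintype ι] (u v : ι → ℝ) : ℝ :=
  ∑ i, u i * log (u i / v i)

lemma sub_le_mul_log_div {u v : ℝ} (hu : 0 < u) (hv : 0 < v) : u - v ≤ u * log (u / v) := by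
  have h := mul_le_mul_of_nonneg_left (one_sub_inv_le_log_of_pos (div_pos hu hv)) hu.le
  rwa [inv_div, mul_sub, mul_one, mul_div_cancel₀ v hu.ne'] at h

section relEntropy

variable {ι : Type*} [Fintype ι]

lemma relEntropy_self (u : ι → ℝ) : relEntropy u u = 0 := by
  simp [relEntropy]

lemma relEntropy_nonneg {u v : ι → ℝ} (hu : ∀ i, 0 < u i) (hv : ∀ i, 0 < v i)
    (huv : ∑ i, u i = ∑ i, v i) : 0 ≤ relEntropy u v := by
  calc 0 = ∑ i, (u i - v i) := by rw [sum_sub_distrib, huv, sub_self]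
    _ ≤ relEntropy u v := sum_le_sum fun i _ => sub_le_mul_log_div (hu i) (hv i)

lemma one_sub_mul_relEntropy_add_mul_relEntropy {p r q x : ι → ℝ} {α Z : ℝ}
    (hp : ∀ i, 0 < p i) (hr : ∀ i, 0 < r i) (hx : ∀ i, x i ≠ 0) (hZ : Z ≠ 0)
    (hq : ∀ i, q i = p i ^ (1 - α) * r i ^ α / Z) :
    (1 - α) * relEntropy x p + α * relEntropy x r = relEntropy x q - log Z * ∑ i, x i := by
  have hlog_q : ∀ i, log (q i) = (1 - α) * log (p i) + α * log (r i) - log Z := fun i => by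
    have hpα := (rpow_pos_of_pos (hp i) (1 - α)).ne'
    have hrα := (rpow_pos_of_pos (hr i) α).ne'
    rw [hq, log_div (mul_ne_zero hpα hrα) hZ, log_mul hpα hrα, log_rpow (hp i), log_rpow (hr i)]
  have hq0 : ∀ i, q i ≠ 0 := fun i => by
    rw [hq]; exact div_ne_zero (by positivity [hp i, hr i]) hZ
  simp only [relEntropy, mul_sum, ← sum_sub_distrib, ← sum_add_distrib]
  refine sum_congr rfl fun i _ => ?_
  rw [log_div (hx i) (hp i).ne', log_div (hx i) (hr i).ne', log_div (hx i) (hq0 i), hlog_q]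
  ring

end relEntropy

theorem stmt_15_general {ι : Type*} [Fintype ι]
    (p r : ι → ℝ) (hp : ∀ i, 0 < p i) (hr : ∀ i, 0 < r i)
    (hps : ∑ i, p i = 1)
    (α : ℝ) (hα : α ∈ Set.Ico (0:ℝ) 1)
    (Z : ℝ) (hZ : Z = ∑ j, p j ^ (1 - α) * r j ^ α)
    (q : ι → ℝ) (hq : ∀ i, q i = p i ^ (1 - α) * r i ^ α / Z) :
    ∑ i, q i * Real.log (q i / r i) ≤ ∑ i, p i * Real.log (p i / r i) := by
  obtain ⟨hα0, hα1⟩ := hα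
  have : Nonempty ι := by
    by_contra h
    simp [not_nonempty_iff.mp h] at hps
  have hZpos : 0 < Z := hZ ▸ sum_pos (fun i _ => by positivity [hp i, hr i]) univ_nonempty
  have hqpos : ∀ i, 0 < q i := fun i => hq i ▸ by positivity [hp i, hr i]
  have hqs : ∑ i, q i = 1 := by simp only [hq, ← sum_div, ← hZ, div_self hZpos.ne']
  have hJ := fun (x : ι → ℝ) (hx : ∀ i, 0 < x i) =>
    one_sub_mul_relEntropy_add_mul_relEntropy hp hr (fun i => (hx i).ne') hZpos.ne' hq
  have hJq := hJ q hqpos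
  have hJp := hJ p hp
  rw [relEntropy_self, hqs] at hJq
  rw [relEntropy_self, hps] at hJp
  have hqp := relEntropy_nonneg hqpos hp (hqs.trans hps.symm)
  have hpq := relEntropy_nonneg hp hqpos (hps.trans hqs.symm)
  have hmul : α * relEntropy q r ≤ α * relEntropy p r := by
    linarith [mul_nonneg (sub_nonneg.2 hα1.le) hqp]
  rcases hα0.eq_or_lt with rfl | hα0
  · have hq_eq_p : q = p := funext fun i => by simp [hq, hZ, hps]
    rw [hq_eq_p]
  · exact le_of_mul_le_mul_left hmul hα0

theorem stmt_15 {ι : Type*} [Fintype ι]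
    (p r : ι → ℝ) (hp : ∀ i, 0 < p i) (hr : ∀ i, 0 < r i)
    (hps : ∑ i, p i = 1) (hrs : ∑ i, r i = 1)
    (α : ℝ) (hα : α ∈ Set.Ico (0:ℝ) 1)
    (Z : ℝ) (hZ : Z = ∑ j, p j ^ (1 - α) * r j ^ α)
    (q : ι → ℝ) (hq : ∀ i, q i = p i ^ (1 - α) * r i ^ α / Z) :
    ∑ i, q i * Real.log (q i / r i) ≤ ∑ i, p i * Real.log (p i / r i) :=
  stmt_15_general p r hp hr hps α hα Z hZ q hq
end
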